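/- arXiv:2602.02324 — 2 statements merged into one kernel-verified Lean document; each statement's English description precedes it below -/
import Mathlib

section
/- For a generalized Hénon map h(x,y)= (y, P(y) - δx) with deg P ≥ 2, there exists R > 0 such that every point (x,y) with |y| > R and |y| ≥ |x| satisfies ‖hⁿ(x,y)‖ → ∞ as n → ∞. -/
open Filter

/-!
Write `P(y) = y Q(y) + P(0)` with `deg Q ≥ 1`. Since `|Q(y)| → ∞`, for `|y|` large
`|P(y)| ≥ (2 + |δ|) |y|`, so on `{|y| > R, |x| ≤ |y|}` the second coordinate of
`h(x, y)` has modulus at least `|P(y)| - |δ| |x| ≥ 2 |y|`. Hence this region is forward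
invariant and the second coordinate at least doubles at each step.
-/

namespace Polynomial

variable {𝕜 : Type*} [NormedField 𝕜]

theorem eventually_mul_norm_le_norm_eval (P : 𝕜[X]) (hP : 2 ≤ P.natDegree) (C : ℝ) :
    ∀ᶠ y in Bornology.cobounded 𝕜, C * ‖y‖ ≤ ‖P.eval y‖ := by
  have hQ : 0 < P.divX.degree := by
    rw [← natDegree_pos_iff_degree_pos, natDegree_divX_eq_natDegree_tsub_one]
    omega
  filter_upwards [(P.divX.tendsto_norm_atTop hQ tendsto_norm_cobounded_atTop).eventually_ge_atTop
      (C + 1), eventually_cobounded_le_norm ‖P.coeff 0‖] with y hQy hy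
  have hPy : P.eval y = y * P.divX.eval y + P.coeff 0 := by
    simpa only [eval_add, eval_mul, eval_X, eval_C] using
      (congrArg (eval y) (X_mul_divX_add P)).symm
  calc C * ‖y‖ = (C + 1) * ‖y‖ - ‖y‖ := by ring
    _ ≤ ‖y‖ * ‖P.divX.eval y‖ - ‖P.coeff 0‖ := by
      nlinarith [mul_le_mul_of_nonneg_left hQy (norm_nonneg y)]
    _ ≤ ‖P.eval y‖ := by
      rw [hPy, ← norm_mul]
      exact norm_sub_le_norm_add _ _

end Polynomial

section Henon

variable {𝕜 : Type*} [NormedField 𝕜]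

def henonMap (f : 𝕜 → 𝕜) (δ : 𝕜) (p : 𝕜 × 𝕜) : 𝕜 × 𝕜 := (p.2, f p.2 - δ * p.1)

/-- The region `V⁻` of the paper. -/
def henonVMinus (R : ℝ) : Set (𝕜 × 𝕜) := {p | R < ‖p.2‖ ∧ ‖p.1‖ ≤ ‖p.2‖}

variable {f : 𝕜 → 𝕜} {δ : 𝕜} {R : ℝ}

theorem two_mul_norm_snd_le_norm_snd_henonMap
    (hf : ∀ y, R < ‖y‖ → (2 + ‖δ‖) * ‖y‖ ≤ ‖f y‖) {p : 𝕜 × 𝕜} (hp : p ∈ henonVMinus R) :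
    2 * ‖p.2‖ ≤ ‖(henonMap f δ p).2‖ := by
  obtain ⟨hR, hxy⟩ := hp
  have hδx : ‖δ * p.1‖ ≤ ‖δ‖ * ‖p.2‖ := by
    rw [norm_mul]
    exact mul_le_mul_of_nonneg_left hxy (norm_nonneg δ)
  calc 2 * ‖p.2‖ = (2 + ‖δ‖) * ‖p.2‖ - ‖δ‖ * ‖p.2‖ := by ring
    _ ≤ ‖f p.2‖ - ‖δ * p.1‖ := by linarith [hf p.2 hR]
    _ ≤ ‖f p.2 - δ * p.1‖ := norm_sub_norm_le _ _

theorem mapsTo_henonMap_henonVMinus (hf : ∀ y, R < ‖y‖ → (2 + ‖δ‖) * ‖y‖ ≤ ‖f y‖) :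
    Set.MapsTo (henonMap f δ) (henonVMinus R) (henonVMinus R) := fun p hp => by
  have h2 := two_mul_norm_snd_le_norm_snd_henonMap hf hp
  have h0 := norm_nonneg p.2
  exact ⟨by linarith [hp.1], show ‖p.2‖ ≤ _ by linarith⟩

theorem pow_mul_norm_snd_le_norm_snd_iterate_henonMap
    (hf : ∀ y, R < ‖y‖ → (2 + ‖δ‖) * ‖y‖ ≤ ‖f y‖) {p : 𝕜 × 𝕜} (hp : p ∈ henonVMinus R)
    (n : ℕ) : 2 ^ n * ‖p.2‖ ≤ ‖((henonMap f δ)^[n] p).2‖ := by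
  induction n with
  | zero => simp
  | succ n ih =>
    rw [Function.iterate_succ_apply', pow_succ', mul_assoc]
    have hmem := (mapsTo_henonMap_henonVMinus hf).iterate n hp
    linarith [two_mul_norm_snd_le_norm_snd_henonMap hf hmem]

end Henon

theorem henon_Vminus_escapes_general
    (P : Polynomial ℂ) (hP : 2 ≤ P.natDegree) (δ : ℂ)
    (h : ℂ × ℂ → ℂ × ℂ) (hh : ∀ x y : ℂ, h (x, y) = (y, P.eval y - δ * x)) :
    ∃ R > (0 : ℝ), ∀ x y : ℂ, R < ‖y‖ → ‖x‖ ≤ ‖y‖ →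
      Tendsto (fun n : ℕ =>
          max ‖(h^[n] (x, y)).1‖ ‖(h^[n] (x, y)).2‖)
        atTop atTop := by
  obtain rfl : h = henonMap P.eval δ := funext fun p => hh p.1 p.2
  obtain ⟨R, -, hR⟩ := hasBasis_cobounded_norm.eventually_iff.mp
    (P.eventually_mul_norm_le_norm_eval hP (2 + ‖δ‖))
  refine ⟨max R 1, by positivity, fun x y hy hxy => ?_⟩
  have hf : ∀ y : ℂ, max R 1 < ‖y‖ → (2 + ‖δ‖) * ‖y‖ ≤ ‖P.eval y‖ :=
    fun y hy => hR (le_of_max_le_left hy.le)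
  have hy0 : 0 < ‖y‖ := lt_of_le_of_lt (by positivity) hy
  refine tendsto_atTop_mono (fun n => ?_)
    ((tendsto_pow_atTop_atTop_of_one_lt one_lt_two).atTop_mul_const hy0)
  exact (pow_mul_norm_snd_le_norm_snd_iterate_henonMap hf (p := (x, y)) ⟨hy, hxy⟩ n).trans
    (le_max_right _ _)

/-- For a generalized Hénon map with `deg P ≥ 2`, there is `R > 0` such that every
point in `V⁻ = {|y| > R, |y| ≥ |x|}` escapes to infinity under forward iteration. -/
theorem henon_Vminus_escapes
    (P : Polynomial ℂ) (hP : 2 ≤ P.natDegree) (δ : ℂ) (hδ : δ ≠ 0)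
    (h : ℂ × ℂ → ℂ × ℂ) (hh : ∀ x y : ℂ, h (x, y) = (y, P.eval y - δ * x)) :
    ∃ R > (0 : ℝ), ∀ x y : ℂ, R < ‖y‖ → ‖x‖ ≤ ‖y‖ →
      Tendsto (fun n : ℕ =>
          max ‖(h^[n] (x, y)).1‖ ‖(h^[n] (x, y)).2‖)
        atTop atTop :=
  henon_Vminus_escapes_general P hP δ h hh
end

section
/- Let G be a countable group acting by homeomorphisms on ℂ², ν a probability measure on G, and μ a ν-stationary Borel probability measure on ℂ². Suppose U ⊆ ℂ² is a Borel set such that for every t > 0 there is k₀ with: for every g in the support of ν*ᵏ with k ≥ k₀, g(U) ∩ B̄_t(0) = ∅, where ν*ᵏ-mass concentrates on such g (i.e., every element of supp(ν*ᵏ) has this escape property). Then μ(U) = 0. -/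
open MeasureTheory Metric
open scoped ENNReal

/-- Convolution of densities on a countable group. -/
noncomputable def conv {G : Type*} [Group G] (μ ν : G → ℝ≥0∞) : G → ℝ≥0∞ :=
  fun g => ∑' h : G, μ h * ν (h⁻¹ * g)

/-- `n`-fold convolution power `ν*ⁿ` (with `ν*¹ = ν`). -/
noncomputable def convPow {G : Type*} [Group G] [DecidableEq G]
    (ν : G → ℝ≥0∞) : ℕ → G → ℝ≥0∞
  | 0 => fun g => if g = 1 then 1 else 0
  | n + 1 => conv ν (convPow ν n)

/-!
Iterating stationarity, `μ = ∑ g, ν*ᵏ(g) • g_* μ` for every `k`. If every `g` in the support of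
`ν*ᵏ` maps `U` outside the ball `B̄_t(0)`, then `U ⊆ g⁻¹(B̄_t(0)ᶜ)` for all such `g`, and
averaging gives `μ U ≤ μ (B̄_t(0)ᶜ)`. The right-hand side tends to `0` as `t → ∞`.
-/

open Filter Topology

section Convolution

variable {G : Type*} [Group G]

theorem tsum_conv_mul (a b f : G → ℝ≥0∞) :
    ∑' g, conv a b g * f g = ∑' h, a h * ∑' g, b g * f (h * g) := by
  calc ∑' g, conv a b g * f g
      = ∑' g, ∑' h, a h * (b (h⁻¹ * g) * f g) := by
        simp only [conv, ← ENNReal.tsum_mul_right, mul_assoc]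
    _ = ∑' h, a h * ∑' g, b (h⁻¹ * g) * f g := by
        rw [ENNReal.tsum_comm]
        simp only [ENNReal.tsum_mul_left]
    _ = ∑' h, a h * ∑' g, b g * f (h * g) := by
        refine tsum_congr fun h => congrArg (a h * ·) ?_
        rw [← (Equiv.mulLeft h).tsum_eq]
        simp

variable [DecidableEq G]

theorem tsum_convPow_zero_mul (ν f : G → ℝ≥0∞) : ∑' g, convPow ν 0 g * f g = f 1 := by
  rw [tsum_eq_single 1 fun g hg => by simp [convPow, hg]]
  simp [convPow]

theorem tsum_convPow {ν : G → ℝ≥0∞} (hν : ∑' g, ν g = 1) (k : ℕ) :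
    ∑' g, convPow ν k g = 1 := by
  induction k with
  | zero => simpa using tsum_convPow_zero_mul ν 1
  | succ k ih =>
    simpa [convPow, ih, ENNReal.tsum_mul_right, hν] using tsum_conv_mul ν (convPow ν k) 1

end Convolution

namespace MeasureTheory.Measure

variable {G X : Type*} [MeasurableSpace X]

def IsStationary [SMul G X] (ν : G → ℝ≥0∞) (μ : Measure X) : Prop :=
  ∀ A, MeasurableSet A → μ A = ∑' g, ν g * μ ((fun x => g • x) ⁻¹' A)

theorem IsStationary.measure_le_of_subset_preimage [SMul G X] {p : G → ℝ≥0∞} {μ : Measure X}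
    (hμ : μ.IsStationary p) (hp : ∑' g, p g = 1) {U A : Set X} (hA : MeasurableSet A)
    (hUA : ∀ g, p g ≠ 0 → U ⊆ (fun x => g • x) ⁻¹' A) : μ U ≤ μ A := by
  calc μ U = ∑' g, p g * μ U := by rw [ENNReal.tsum_mul_right, hp, one_mul]
    _ ≤ ∑' g, p g * μ ((fun x => g • x) ⁻¹' A) := by
        refine ENNReal.tsum_le_tsum fun g => ?_
        by_cases hg : p g = 0
        · simp [hg]
        · exact mul_le_mul_right (measure_mono (hUA g hg)) _
    _ = μ A := (hμ A hA).symm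

variable [Group G] [MulAction G X] {μ : Measure X}

theorem isStationary_convPow_zero [DecidableEq G] (ν : G → ℝ≥0∞) :
    μ.IsStationary (convPow ν 0) := fun A _ => by
  simp [tsum_convPow_zero_mul]

variable [MeasurableConstSMul G X]

theorem IsStationary.conv {a b : G → ℝ≥0∞} (ha : μ.IsStationary a) (hb : μ.IsStationary b) :
    μ.IsStationary (_root_.conv a b) := by
  intro A hA
  have hpre : ∀ h g : G, (fun x : X => g • x) ⁻¹' ((fun x => h • x) ⁻¹' A) =
      (fun x => (h * g) • x) ⁻¹' A := fun h g => by ext; simp [mul_smul]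
  rw [tsum_conv_mul, ha A hA]
  refine tsum_congr fun h => congrArg (a h * ·) ?_
  simp only [hb _ (hA.preimage (measurable_const_smul h)), hpre]

theorem IsStationary.convPow [DecidableEq G] {ν : G → ℝ≥0∞} (hν : μ.IsStationary ν) (k : ℕ) :
    μ.IsStationary (_root_.convPow ν k) := by
  induction k with
  | zero => exact isStationary_convPow_zero ν
  | succ k ih => exact hν.conv ih

end MeasureTheory.Measure

theorem tendsto_measure_compl_closedBall_atTop {X : Type*} [PseudoMetricSpace X]
    [MeasurableSpace X] [OpensMeasurableSpace X] (μ : Measure X) [IsFiniteMeasure μ] (x : X) :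
    Tendsto (fun r : ℝ => μ (closedBall x r)ᶜ) atTop (𝓝 0) := by
  have hempty : ⋂ r : ℝ, (closedBall x r)ᶜ = ∅ :=
    Set.eq_empty_of_forall_notMem fun y hy =>
      Set.mem_iInter.1 hy (dist y x) (mem_closedBall.2 le_rfl)
  have h := tendsto_measure_iInter_atTop (μ := μ) (s := fun r : ℝ => (closedBall x r)ᶜ)
    (fun r => measurableSet_closedBall.compl.nullMeasurableSet)
    (fun r s hrs => Set.compl_subset_compl.2 (closedBall_subset_closedBall hrs))
    ⟨0, measure_ne_top μ _⟩
  rwa [hempty, measure_empty] at h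

theorem stationary_measure_escaping_set_null_general
    {G : Type*} [Group G] [DecidableEq G] [MulAction G (ℂ × ℂ)]
    (hcont : ∀ g : G, Continuous fun x : ℂ × ℂ => g • x)
    (ν : G → ℝ≥0∞) (hν : ∑' g : G, ν g = 1)
    (μ : Measure (ℂ × ℂ)) [IsProbabilityMeasure μ]
    (hstat : ∀ A : Set (ℂ × ℂ), MeasurableSet A →
      μ A = ∑' g : G, ν g * μ ((fun x => g • x) ⁻¹' A))
    (U : Set (ℂ × ℂ))
    (hesc : ∀ t > (0 : ℝ), ∃ k₀ : ℕ, ∀ k ≥ k₀, ∀ g : G, convPow ν k g ≠ 0 →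
      ((fun x => g • x) '' U) ∩ closedBall (0 : ℂ × ℂ) t = ∅) :
    μ U = 0 := by
  have : MeasurableConstSMul G (ℂ × ℂ) := ⟨fun g => (hcont g).measurable⟩
  have hstat : μ.IsStationary ν := hstat
  have hU_le : ∀ t > (0 : ℝ), μ U ≤ μ (closedBall 0 t)ᶜ := fun t ht => by
    obtain ⟨k, hk⟩ := hesc t ht
    refine (hstat.convPow k).measure_le_of_subset_preimage (tsum_convPow hν k)
      measurableSet_closedBall.compl fun g hg => ?_
    rw [← Set.image_subset_iff, Set.subset_compl_iff_disjoint_right,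
      Set.disjoint_iff_inter_eq_empty]
    exact hk k le_rfl g hg
  exact nonpos_iff_eq_zero.1 <| ge_of_tendsto (tendsto_measure_compl_closedBall_atTop μ 0)
    ((eventually_gt_atTop 0).mono hU_le)

/-- If `μ` is a `ν`-stationary Borel probability measure on `ℂ²`, and `U` is a Borel
set such that for every `t > 0`, for all sufficiently large `k`, every `g` in the
support of the `k`-fold convolution `ν*ᵏ` moves `U` entirely outside the closed ball
of radius `t`, then `μ(U) = 0`. -/
theorem stationary_measure_escaping_set_null
    {G : Type*} [Group G] [Countable G] [DecidableEq G] [MulAction G (ℂ × ℂ)]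
    (hcont : ∀ g : G, Continuous fun x : ℂ × ℂ => g • x)
    (ν : G → ℝ≥0∞) (hν : ∑' g : G, ν g = 1)
    (μ : Measure (ℂ × ℂ)) [IsProbabilityMeasure μ]
    (hstat : ∀ A : Set (ℂ × ℂ), MeasurableSet A →
      μ A = ∑' g : G, ν g * μ ((fun x => g • x) ⁻¹' A))
    (U : Set (ℂ × ℂ)) (hU : MeasurableSet U)
    (hesc : ∀ t > (0 : ℝ), ∃ k₀ : ℕ, ∀ k ≥ k₀, ∀ g : G, convPow ν k g ≠ 0 →
      ((fun x => g • x) '' U) ∩ closedBall (0 : ℂ × ℂ) t = ∅) :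
    μ U = 0 :=
  stationary_measure_escaping_set_null_general hcont ν hν μ hstat U hesc
end
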